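/- arXiv:1109.3526 — 2 statements merged into one kernel-verified Lean document; each statement's English description precedes it below -/
import Mathlib

section
/- Define f_n(t) = (1 − t)^n · Σ_{j=0}^{n−1} t^j · C(n+j−1, j). If t ∈ ℂ satisfies |t(1−t)| > 1/4, then the sequence (f_n(t))_{n≥1} does not converge; indeed |f_{n+1}(t) − f_n(t)| = C(2n,n) |t(1−t)|^n |t − 1/2| → ∞ as n → ∞. -/
/-!
Multiplying the sum in `f_{n+1}` by `1 - t` and applying Pascal's rule telescopes it into the sum
in `f_n` plus two boundary terms, which gives the closed form
`f_{n+1}(t) - f_n(t) = C(2n,n) (t(1-t))^n (1/2 - t)`.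
Since `C(2n,n) ≥ 4^n / (2n)`, the differences grow like `(4|t(1-t)|)^n / n`, which is unbounded
when `4|t(1-t)| > 1`; note `t ≠ 1/2` there, as `t(1-t) = 1/4` at `t = 1/2`.
-/

open Filter

/-- `f_n(t) = (1-t)^n ∑_{j=0}^{n-1} t^j C(n+j-1,j)`, the ensemble average polynomial
after the substitution `t = z/β`. -/
noncomputable def fEns (n : ℕ) (t : ℂ) : ℂ :=
  (1 - t) ^ n * ∑ j ∈ Finset.range n, t ^ j * (Nat.choose (n + j - 1) j : ℂ)

open Finset Topology

theorem one_sub_mul_sum_pow_mul_choose {R : Type*} [CommRing R] (t : R) (m N : ℕ) :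
    (1 - t) * ∑ j ∈ range (N + 1), t ^ j * ((m + 1 + j).choose j : R) =
      ∑ j ∈ range (N + 1), t ^ j * ((m + j).choose j : R) -
        ((m + 1 + N).choose N : R) * t ^ (N + 1) := by
  induction N with
  | zero => simp
  | succ N ih =>
    have pascal : ((m + 1 + (N + 1)).choose (N + 1) : R) =
        ((m + 1 + N).choose N : R) + ((m + (N + 1)).choose (N + 1) : R) := by
      rw [show m + 1 + (N + 1) = m + 1 + N + 1 by omega, show m + (N + 1) = m + 1 + N by omega,
        Nat.choose_succ_succ', Nat.cast_add]
    rw [sum_range_succ, sum_range_succ (fun j => t ^ j * ((m + j).choose j : R)), mul_add, ih]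
    linear_combination t ^ (N + 1) * pascal

theorem Nat.centralBinom_succ_eq_two_mul_choose (n : ℕ) :
    (n + 1).centralBinom = 2 * (n + (n + 1)).choose (n + 1) := by
  rw [centralBinom_eq_two_mul_choose, show 2 * (n + 1) = 2 * n + 1 + 1 by ring,
    show n + (n + 1) = 2 * n + 1 by ring, choose_succ_succ', choose_symm_half]
  ring

theorem fEns_succ (m : ℕ) (t : ℂ) :
    fEns (m + 1) t =
      (1 - t) ^ (m + 1) * ∑ j ∈ range (m + 1), t ^ j * ((m + j).choose j : ℂ) := by
  unfold fEns
  congr 1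
  refine sum_congr rfl fun j _ => ?_
  rw [show m + 1 + j - 1 = m + j by omega]

theorem fEns_succ_succ_sub_fEns_succ (m : ℕ) (t : ℂ) :
    fEns (m + 1 + 1) t - fEns (m + 1) t =
      ((m + 1).centralBinom : ℂ) * (t * (1 - t)) ^ (m + 1) * (1 / 2 - t) := by
  rw [fEns_succ (m + 1), fEns_succ m, pow_succ, mul_assoc, one_sub_mul_sum_pow_mul_choose,
    sum_range_succ, Nat.centralBinom_succ_eq_two_mul_choose, Nat.cast_mul, mul_pow,
    show m + 1 + (m + 1) = 2 * (m + 1) by ring, ← Nat.centralBinom_eq_two_mul_choose,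
    Nat.centralBinom_succ_eq_two_mul_choose]
  push_cast
  ring

theorem norm_fEns_succ_sub_fEns {n : ℕ} (hn : n ≠ 0) (t : ℂ) :
    ‖fEns (n + 1) t - fEns n t‖ = n.centralBinom * ‖t * (1 - t)‖ ^ n * ‖t - 1 / 2‖ := by
  obtain ⟨m, rfl⟩ := Nat.exists_eq_succ_of_ne_zero hn
  rw [fEns_succ_succ_sub_fEns_succ, norm_mul, norm_mul, norm_pow, norm_sub_rev,
    Complex.norm_natCast]

theorem tendsto_pow_div_self_atTop {r : ℝ} (hr : 1 < r) :
    Tendsto (fun n : ℕ => r ^ n / n) atTop atTop := by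
  have hzero : Tendsto (fun n : ℕ => (n : ℝ) / r ^ n) atTop (𝓝[>] 0) := by
    refine tendsto_nhdsWithin_iff.mpr
      ⟨by simpa using tendsto_pow_const_div_const_pow_of_one_lt 1 hr, ?_⟩
    filter_upwards [eventually_gt_atTop 0] with n hn
    exact div_pos (Nat.cast_pos.mpr hn) (pow_pos (zero_lt_one.trans hr) n)
  exact hzero.inv_tendsto_nhdsGT_zero.congr fun n => inv_div _ _

theorem tendsto_centralBinom_mul_pow_atTop {x : ℝ} (hx : 1 / 4 < x) :
    Tendsto (fun n : ℕ => (n.centralBinom : ℝ) * x ^ n) atTop atTop := by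
  have hx0 : 0 ≤ x := by linarith
  refine tendsto_atTop_mono' _ ?_
    ((tendsto_pow_div_self_atTop (by linarith : 1 < 4 * x)).atTop_div_const two_pos)
  filter_upwards [eventually_gt_atTop 0] with n hn
  have hfour : (4 : ℝ) ^ n ≤ 2 * n * n.centralBinom := by
    exact_mod_cast Nat.four_pow_le_two_mul_self_mul_centralBinom n hn
  rw [div_div, div_le_iff₀ (by positivity), mul_pow]
  calc 4 ^ n * x ^ n ≤ 2 * n * n.centralBinom * x ^ n := by gcongr
    _ = n.centralBinom * x ^ n * (n * 2) := by ring

theorem not_tendsto_nhds_of_tendsto_norm_sub_atTop {E : Type*} [SeminormedAddCommGroup E]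
    {u : ℕ → E} (h : Tendsto (fun n => ‖u (n + 1) - u n‖) atTop atTop) (L : E) :
    ¬ Tendsto u atTop (𝓝 L) := fun hL => by
  have hdiff := ((hL.comp (tendsto_add_atTop_nat 1)).sub hL).norm
  rw [sub_self, norm_zero] at hdiff
  exact not_tendsto_nhds_of_tendsto_atTop h 0 hdiff

theorem norm_sub_half_pos {t : ℂ} (ht : 1 / 4 < ‖t * (1 - t)‖) : 0 < ‖t - 1 / 2‖ := by
  refine norm_pos_iff.mpr fun h => ?_
  rw [sub_eq_zero.mp h] at ht
  norm_num at ht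

/-- Outside the closure of the convergence region, i.e. when `|t(1-t)| > 1/4`, the sequence
`(f_n(t))` diverges: the consecutive differences satisfy
`|f_{n+1}(t) - f_n(t)| = C(2n,n) |t(1-t)|^n |t - 1/2|`, which tends to infinity. -/
theorem fEns_divergence (t : ℂ) (ht : 1 / 4 < ‖t * (1 - t)‖) :
    (∀ n : ℕ, 1 ≤ n →
      ‖fEns (n + 1) t - fEns n t‖ =
        (Nat.choose (2 * n) n : ℝ) * ‖t * (1 - t)‖ ^ n *
          ‖t - 1 / 2‖) ∧
    Tendsto (fun n : ℕ => ‖fEns (n + 1) t - fEns n t‖) atTop atTop ∧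
    ¬ ∃ L : ℂ, Tendsto (fun n : ℕ => fEns n t) atTop (nhds L) := by
  have hnorm : ∀ n : ℕ, 1 ≤ n → ‖fEns (n + 1) t - fEns n t‖ =
      (Nat.choose (2 * n) n : ℝ) * ‖t * (1 - t)‖ ^ n * ‖t - 1 / 2‖ := fun n hn =>
    norm_fEns_succ_sub_fEns (Nat.one_le_iff_ne_zero.mp hn) t
  have htop : Tendsto (fun n : ℕ => ‖fEns (n + 1) t - fEns n t‖) atTop atTop := by
    refine ((tendsto_centralBinom_mul_pow_atTop ht).atTop_mul_const (norm_sub_half_pos ht)).congr'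
      ?_
    filter_upwards [eventually_ge_atTop 1] with n hn
    exact (hnorm n hn).symm
  refine ⟨hnorm, htop, ?_⟩
  rintro ⟨L, hL⟩
  exact not_tendsto_nhds_of_tendsto_norm_sub_atTop (u := (fEns · t)) htop L hL
end

section
/- Let β > 0 and let α > β/(2√2 + 2). Define P̄_n(z) = (1 − z/β)^n Σ_{j=0}^{n−1} (z/β)^j (n+j−1)!/(j!(n−1)!). Then there exists a point z₀ in the open disk {z ∈ ℂ : |z − β| < α} with |z₀² − βz₀| > β²/4, and for any such point the sequence (P̄_n(z₀))_{n≥1} does not converge; in particular sup_{|z−β|<α} |P̄_n(z)| does not tend to 0 as n → ∞. -/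
open Filter Topology

/-- The ensemble average polynomial
`P̄_n(z) = (1 - z/β)^n ∑_{j=0}^{n-1} (z/β)^j (n+j-1)!/(j!(n-1)!)`. -/
noncomputable def ensembleAvg (n : ℕ) (β : ℂ) (z : ℂ) : ℂ :=
  (1 - z / β) ^ n * ∑ j ∈ Finset.range n,
    (z / β) ^ j *
      ((Nat.factorial (n + j - 1) : ℂ) /
        ((Nat.factorial j : ℂ) * (Nat.factorial (n - 1) : ℂ)))

/-!
With `w = z / β`, `P̄_{n+1}(z)` is `(1 - w)^(n+1)` times the degree-`n` truncation of the
series `(1 - w)^(-(n+1)) = ∑ C(n+j, j) w^j`. Pascal's rule gives the consecutive differences in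
closed form: `P̄_{n+2} - P̄_{n+1} = C(2n+1, n+1) (1 - 2w) ((1 - w) w)^(n+1)`. Since
`C(2n+1, n+1) ≥ 4^(n+1) / (6(n+1))`, these differences are unbounded once `|(1 - w) w| > 1/4`,
i.e. `|z² - βz| > β²/4`, so `P̄_n(z)` diverges there. On the real axis `(β + ρ) ρ` increases in
`ρ > 0` and equals `β²/4` at `ρ = β/(2√2+2)`, so `z₀ = β + ρ` with `β/(2√2+2) < ρ < α` is such a
point of the disk; the supremum over the disk dominates `|P̄_n(z₀)|`, hence cannot tend to `0`.
-/

section NegBinomSum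

variable {R : Type*} [CommRing R]

def negBinomSum (n m : ℕ) (w : R) : R :=
  ∑ j ∈ Finset.range m, ((n + j).choose j : R) * w ^ j

theorem negBinomSum_succ (n m : ℕ) (w : R) :
    negBinomSum n (m + 1) w = negBinomSum n m w + ((n + m).choose m : R) * w ^ m :=
  Finset.sum_range_succ _ _

theorem negBinomSum_succ_succ (n m : ℕ) (w : R) :
    negBinomSum (n + 1) (m + 1) w = negBinomSum n (m + 1) w + w * negBinomSum (n + 1) m w := by
  induction m with
  | zero => simp [negBinomSum]
  | succ m ih =>
    rw [negBinomSum_succ (n + 1) (m + 1), negBinomSum_succ n (m + 1),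
      show n + 1 + (m + 1) = n + 1 + m + 1 by omega, Nat.choose_succ_succ',
      show n + (m + 1) = n + 1 + m by omega]
    push_cast
    linear_combination ih - w * negBinomSum_succ (n + 1) m w

theorem one_sub_mul_negBinomSum (n m : ℕ) (w : R) :
    (1 - w) * negBinomSum (n + 1) (m + 1) w =
      negBinomSum n (m + 1) w - ((n + 1 + m).choose m : R) * w ^ (m + 1) := by
  linear_combination negBinomSum_succ_succ n m w - w * negBinomSum_succ (n + 1) m w

end NegBinomSum

theorem ensembleAvg_succ (n : ℕ) (β z : ℂ) :
    ensembleAvg (n + 1) β z = (1 - z / β) ^ (n + 1) * negBinomSum n (n + 1) (z / β) := by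
  rw [ensembleAvg, negBinomSum]
  congr 1
  refine Finset.sum_congr rfl fun j _ => ?_
  rw [Nat.add_sub_cancel, show n + 1 + j - 1 = n + j by omega, add_comm n j,
    Nat.cast_add_choose]
  ring

theorem Nat.choose_two_mul_add_two (n : ℕ) :
    (2 * n + 2).choose (n + 1) = 2 * (2 * n + 1).choose (n + 1) := by
  rw [Nat.choose_succ_succ', ← Nat.choose_symm_half]
  ring

theorem ensembleAvg_succ_succ_sub (n : ℕ) (β z : ℂ) :
    ensembleAvg (n + 2) β z - ensembleAvg (n + 1) β z =
      ((2 * n + 1).choose (n + 1) : ℂ) * (1 - 2 * (z / β)) * ((1 - z / β) * (z / β)) ^ (n + 1) := by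
  have h := one_sub_mul_negBinomSum n (n + 1) (z / β)
  rw [negBinomSum_succ n (n + 1), show n + 1 + (n + 1) = 2 * n + 2 by ring,
    Nat.choose_two_mul_add_two, show n + (n + 1) = 2 * n + 1 by ring] at h
  rw [ensembleAvg_succ, ensembleAvg_succ, mul_pow]
  push_cast at h
  linear_combination (1 - z / β) ^ (n + 1) * h

theorem Nat.four_pow_le_choose (n : ℕ) :
    4 ^ (n + 1) ≤ 6 * (n + 1) * (2 * n + 1).choose (n + 1) := by
  have h := Nat.four_pow_le_two_mul_add_one_mul_central_binom (n + 1)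
  rw [show 2 * (n + 1) = 2 * n + 2 by ring, Nat.choose_two_mul_add_two] at h
  nlinarith

theorem norm_ensembleAvg_succ_succ_sub_ge (n : ℕ) (β z : ℂ) :
    ‖1 - 2 * (z / β)‖ * (4 * ‖(1 - z / β) * (z / β)‖) ^ (n + 1) ≤
      6 * (n + 1) * ‖ensembleAvg (n + 2) β z - ensembleAvg (n + 1) β z‖ := by
  have h : ((4 ^ (n + 1) : ℕ) : ℝ) ≤ ((6 * (n + 1) * (2 * n + 1).choose (n + 1) : ℕ) : ℝ) := by
    exact_mod_cast Nat.four_pow_le_choose n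
  push_cast at h
  rw [ensembleAvg_succ_succ_sub, norm_mul (_ * _), norm_pow, norm_mul (_ : ℂ) (1 - 2 * (z / β)),
    Complex.norm_natCast, mul_pow]
  linear_combination (‖1 - 2 * (z / β)‖ * ‖(1 - z / β) * (z / β)‖ ^ (n + 1)) * h

theorem not_tendsto_zero_of_const_mul_pow_le {u : ℕ → ℝ} {c ρ : ℝ} (hc : 0 < c) (hρ : 1 < ρ)
    (h : ∀ n : ℕ, c * ρ ^ n ≤ (n + 1) * u n) : ¬ Tendsto u atTop (𝓝 0) := by
  intro hu
  have hr0 : 0 ≤ ρ⁻¹ := by positivity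
  have hr1 : ρ⁻¹ < 1 := inv_lt_one_of_one_lt₀ hρ
  have hdecay : Tendsto (fun n : ℕ => ((n : ℝ) + 1) * ρ⁻¹ ^ n) atTop (𝓝 0) := by
    simpa [add_mul] using (tendsto_self_mul_const_pow_of_lt_one hr0 hr1).add
      (tendsto_pow_atTop_nhds_zero_of_lt_one hr0 hr1)
  obtain ⟨n, hn⟩ := ((hu.mul hdecay).eventually (gt_mem_nhds (by simpa using hc))).exists
  have hρn : 0 < ρ ^ n := by positivity
  rw [inv_pow, ← mul_assoc, mul_comm (u n), ← div_eq_mul_inv, div_lt_iff₀ hρn] at hn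
  linarith [h n]

theorem norm_one_sub_div_mul_div (β z : ℂ) :
    ‖(1 - z / β) * (z / β)‖ = ‖z ^ 2 - β * z‖ / ‖β‖ ^ 2 := by
  rcases eq_or_ne β 0 with rfl | hβ
  · simp
  rw [show (1 - z / β) * (z / β) = -(z ^ 2 - β * z) / β ^ 2 by field_simp; ring,
    norm_div, norm_neg, norm_pow]

theorem not_tendsto_ensembleAvg {β z : ℂ} (hβ : β ≠ 0) (hz : ‖β‖ ^ 2 / 4 < ‖z ^ 2 - β * z‖) :
    ¬ ∃ L, Tendsto (fun n => ensembleAvg n β z) atTop (𝓝 L) := by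
  rintro ⟨L, hL⟩
  have hq : 1 / 4 < ‖(1 - z / β) * (z / β)‖ := by
    rw [norm_one_sub_div_mul_div, lt_div_iff₀ (by positivity)]
    linarith
  set w := z / β
  have hw : 0 < ‖1 - 2 * w‖ := by
    refine norm_pos_iff.2 fun h => ?_
    rw [show w = 1 / 2 by linear_combination -h / 2] at hq
    norm_num at hq
  set q := ‖(1 - w) * w‖
  have hdiff : Tendsto (fun n => ‖ensembleAvg (n + 2) β z - ensembleAvg (n + 1) β z‖)
      atTop (𝓝 0) := by
    simpa using ((hL.comp (tendsto_add_atTop_nat 2)).sub (hL.comp (tendsto_add_atTop_nat 1))).norm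
  refine not_tendsto_zero_of_const_mul_pow_le (c := ‖1 - 2 * w‖ * (4 * q) / 6) (ρ := 4 * q)
    (by positivity) (by linarith) (fun n => ?_) hdiff
  have := norm_ensembleAvg_succ_succ_sub_ge n β z
  rw [pow_succ] at this
  linarith

theorem sq_div_four_lt_add_mul {β ρ : ℝ} (hβ : 0 < β) (hρ : β / (2 * √2 + 2) < ρ) :
    β ^ 2 / 4 < (β + ρ) * ρ := by
  have hs : √2 ^ 2 = 2 := Real.sq_sqrt (by norm_num)
  have hs1 : 1 < √2 := by nlinarith [Real.sqrt_nonneg 2]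
  rw [div_lt_iff₀ (by positivity)] at hρ
  have h : β * √2 < 2 * ρ + β := by nlinarith
  nlinarith [mul_self_lt_mul_self (by positivity) h]

theorem le_iSup_ball_of_continuous {E : Type*} [PseudoMetricSpace E] [ProperSpace E]
    {g : E → ℝ} (hg : Continuous g) {c x : E} {r : ℝ} (hx : x ∈ Metric.ball c r) :
    g x ≤ ⨆ z ∈ Metric.ball c r, g z := by
  refine le_ciSup₂ (f := fun z (_ : z ∈ Metric.ball c r) => g z) ?_ x hx
  refine ((isCompact_closedBall c r).bddAbove_image hg.continuousOn).mono ?_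
  rintro _ ⟨_, ⟨z, rfl⟩, ⟨hz, rfl⟩⟩
  exact ⟨z, Metric.ball_subset_closedBall hz, rfl⟩

theorem continuous_ensembleAvg (n : ℕ) (β : ℂ) : Continuous (ensembleAvg n β) := by
  unfold ensembleAvg
  fun_prop

/-- If `α > β/(2√2+2)` then the open disk `|z - β| < α` contains a point outside the
closure of the convergence region, `P̄_n` diverges at every such point, and consequently
`sup_{|z-β|<α} |P̄_n(z)|` does not tend to `0`. -/
theorem ensembleAvg_divergence_large_disk (β α : ℝ) (hβ : 0 < β)
    (hα : β / (2 * Real.sqrt 2 + 2) < α) :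
    (∃ z₀ : ℂ, ‖z₀ - β‖ < α ∧
      β ^ 2 / 4 < ‖z₀ ^ 2 - (β : ℂ) * z₀‖) ∧
    (∀ z₀ : ℂ, ‖z₀ - β‖ < α →
      β ^ 2 / 4 < ‖z₀ ^ 2 - (β : ℂ) * z₀‖ →
      ¬ ∃ L : ℂ, Tendsto (fun n : ℕ => ensembleAvg n β z₀) atTop (nhds L)) ∧
    ¬ Tendsto (fun n : ℕ => ⨆ z ∈ Metric.ball (β : ℂ) α, ‖ensembleAvg n β z‖)
        atTop (nhds 0) := by
  have hdiverge (z : ℂ) (hz : β ^ 2 / 4 < ‖z ^ 2 - (β : ℂ) * z‖) :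
      ¬ ∃ L, Tendsto (fun n => ensembleAvg n β z) atTop (𝓝 L) :=
    not_tendsto_ensembleAvg (by exact_mod_cast hβ.ne')
      (by rwa [Complex.norm_real, Real.norm_eq_abs, sq_abs])
  obtain ⟨ρ, hρ, hρα⟩ := exists_between hα
  have hρ0 : 0 < ρ := lt_trans (by positivity) hρ
  have hz₀ : ‖((β + ρ : ℝ) : ℂ) - β‖ < α := by
    rwa [← Complex.ofReal_sub, add_sub_cancel_left, Complex.norm_real, Real.norm_of_nonneg hρ0.le]
  have hz₀' : β ^ 2 / 4 < ‖((β + ρ : ℝ) : ℂ) ^ 2 - β * ((β + ρ : ℝ) : ℂ)‖ := by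
    rw [← Complex.ofReal_pow, ← Complex.ofReal_mul, ← Complex.ofReal_sub, Complex.norm_real,
      Real.norm_of_nonneg (by nlinarith)]
    linarith [sq_div_four_lt_add_mul hβ hρ]
  refine ⟨⟨_, hz₀, hz₀'⟩, fun z _ hz => hdiverge z hz, fun hsup => hdiverge _ hz₀' ⟨0, ?_⟩⟩
  refine squeeze_zero_norm (fun n => le_iSup_ball_of_continuous
    (continuous_ensembleAvg n β).norm ?_) hsup
  rwa [Metric.mem_ball, dist_eq_norm]
end
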